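/- arXiv:1511.03324 — 2 statements merged into one kernel-verified Lean document; each statement's English description precedes it below -/
import Mathlib

section
/- For every word I with letters in {1,2,3} and every c ∈ {1,2,3}, there exist smooth functions σ^a_J : K → ℝ, indexed by a ∈ {1,2,3} and the words J with letters in {1,2,3} and |J| < |I|, such that: (i) for every smooth function u defined on the future light cone K and every (t,x) ∈ K, L^I(∂̄_c u)(t,x) − ∂̄_c(L^I u)(t,x) = Σ_{a, |J| < |I|} σ^a_J(t,x) ∂̄_a(L^J u)(t,x); and (ii) for all words I₁ (letters in {0,1,2,3}) and J₁ (letters in {1,2,3}) there is a constant C, depending on I, J, I₁, J₁, with |∂^{I₁} L^{J₁} σ^a_J(t,x)| ≤ C t^{−|I₁|} for all (t,x) ∈ K. -/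
noncomputable section

/-- Spatial part: Euclidean 3-space. -/
abbrev E3 : Type := EuclideanSpace ℝ (Fin 3)

/-- Spacetime points `(t, x) ∈ ℝ × ℝ³`. -/
abbrev Spt : Type := ℝ × E3

/-- Time derivative `∂_t`. -/
def dt (u : Spt → ℝ) : Spt → ℝ := fun p => fderiv ℝ u p (1, 0)

/-- Spatial derivative `∂_a`, `a = 1,2,3`. -/
def dx (a : Fin 3) (u : Spt → ℝ) : Spt → ℝ :=
  fun p => fderiv ℝ u p (0, EuclideanSpace.single a 1)

/-- `∂_α` for `α ∈ {0,1,2,3}`, with `∂_0 = ∂_t`. -/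
def pd : Fin 4 → (Spt → ℝ) → Spt → ℝ := ![dt, dx 0, dx 1, dx 2]

/-- Iterated derivatives `∂^I` for a word `I` in `{0,1,2,3}`. -/
def pdW : List (Fin 4) → (Spt → ℝ) → Spt → ℝ
  | [], u => u
  | α :: I, u => pd α (pdW I u)

/-- Lorentz boost `L_a = x^a ∂_t + t ∂_a`. -/
def lb (a : Fin 3) (u : Spt → ℝ) : Spt → ℝ :=
  fun p => p.2 a * dt u p + p.1 * dx a u p

/-- Iterated Lorentz boosts `L^J` for a word `J` in `{1,2,3}`. -/
def lbW : List (Fin 3) → (Spt → ℝ) → Spt → ℝ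
  | [], u => u
  | a :: J, u => lb a (lbW J u)

/-- Semi-hyperboloidal derivative `∂̄_a = (x^a/t) ∂_t + ∂_a`. -/
def shd (a : Fin 3) (u : Spt → ℝ) : Spt → ℝ :=
  fun p => (p.2 a / p.1) * dt u p + dx a u p

/-- The `Finset` of all words over the alphabet `k` of length at most `n`. -/
def wordsLe (k : Type) [DecidableEq k] [Fintype k] : ℕ → Finset (List k)
  | 0 => {[]}
  | n + 1 => wordsLe k n ∪ (Finset.univ ×ˢ wordsLe k n).image fun q => q.1 :: q.2

/-- The future light cone `K = {(t,x) : |x| < t − 1}`. -/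
def lightCone : Set Spt := {p : Spt | ‖p.2‖ < p.1 - 1}


/-!
`L_b` and `∂̄_c` are derivations along the vector fields `V_b = (x^b, t e_b)` and
`W_c = (x^c/t, e_c)`, so their commutator is differentiation along the Lie bracket
`[V_b, W_c] = -(x^c/t) W_b`, i.e. `[L_b, ∂̄_c] = -(x^c/t) ∂̄_b`. Moving the boosts of `L^I` past
`∂̄_c` one at a time, with the Leibniz rule
`L_b (σ ∂̄_a L^J u) = (L_b σ) ∂̄_a L^J u + σ ∂̄_a L^{bJ} u - σ (x^a/t) ∂̄_b L^J u`,
writes the commutator as a sum of terms `σ ∂̄_a L^J u` with `|J| < |I|`, whose coefficients are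
polynomials in `t, t⁻¹, x` homogeneous of degree `0`. Boosts preserve the degree of such a
polynomial, `∂_α` lowers it by one, and since `|x^a| ≤ t` in `K`, a polynomial of degree `d` is
`O(t^d)` there.
-/

open scoped ContDiff
open Set Filter VectorField

lemma isOpen_lightCone : IsOpen lightCone :=
  isOpen_lt (by fun_prop) (by fun_prop)

lemma pos_of_mem_lightCone {p : Spt} (hp : p ∈ lightCone) : 0 < p.1 := by
  have : 0 ≤ ‖p.2‖ := norm_nonneg _
  change ‖p.2‖ < p.1 - 1 at hp
  linarith

lemma abs_coord_le_of_mem_lightCone {p : Spt} (hp : p ∈ lightCone) (a : Fin 3) :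
    |p.2 a| ≤ p.1 := by
  have := PiLp.norm_apply_le p.2 a
  change ‖p.2‖ < p.1 - 1 at hp
  rw [Real.norm_eq_abs] at this
  linarith

lemma fderiv_eq_of_eqOn_lightCone {f g : Spt → ℝ} (hfg : EqOn f g lightCone) {p : Spt}
    (hp : p ∈ lightCone) : fderiv ℝ f p = fderiv ℝ g p :=
  (eventuallyEq_of_mem (isOpen_lightCone.mem_nhds hp) hfg).fderiv_eq

lemma ContDiffOn.differentiableAt_of_mem_lightCone {f : Spt → ℝ}
    (hf : ContDiffOn ℝ ∞ f lightCone) {p : Spt} (hp : p ∈ lightCone) : DifferentiableAt ℝ f p :=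
  (hf.differentiableOn (by simp)).differentiableAt (isOpen_lightCone.mem_nhds hp)

lemma ContDiffOn.fderiv_apply_of_isOpen {𝕜 E F : Type*} [NontriviallyNormedField 𝕜]
    [NormedAddCommGroup E] [NormedSpace 𝕜 E] [NormedAddCommGroup F] [NormedSpace 𝕜 F]
    {f : E → F} {V : E → E} {s : Set E} (hf : ContDiffOn 𝕜 ∞ f s) (hV : ContDiffOn 𝕜 ∞ V s)
    (hs : IsOpen s) : ContDiffOn 𝕜 ∞ (fun q => fderiv 𝕜 f q (V q)) s :=
  (hf.fderiv_of_isOpen hs le_rfl).clm_apply hV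

def boostField (a : Fin 3) (q : Spt) : Spt := (q.2 a, q.1 • EuclideanSpace.single a 1)

def shdField (a : Fin 3) (q : Spt) : Spt := (q.2 a / q.1, EuclideanSpace.single a 1)

lemma lb_eq_fderiv_boostField (a : Fin 3) (u : Spt → ℝ) :
    lb a u = fun q => fderiv ℝ u q (boostField a q) := by
  funext q
  have : boostField a q =
      q.2 a • ((1, 0) : Spt) + q.1 • ((0, EuclideanSpace.single a 1) : Spt) := by
    simp [boostField]
  rw [this, map_add, map_smul, map_smul]
  rfl

lemma shd_eq_fderiv_shdField (a : Fin 3) (u : Spt → ℝ) :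
    shd a u = fun q => fderiv ℝ u q (shdField a q) := by
  funext q
  have : shdField a q =
      (q.2 a / q.1) • ((1, 0) : Spt) + ((0, EuclideanSpace.single a 1) : Spt) := by
    simp [shdField]
  rw [this, map_add, map_smul]
  rfl

lemma hasFDerivAt_coord (a : Fin 3) (q : Spt) :
    HasFDerivAt (fun q : Spt => q.2 a)
      ((EuclideanSpace.proj a).comp (ContinuousLinearMap.snd ℝ ℝ E3)) q :=
  ((EuclideanSpace.proj a).comp (ContinuousLinearMap.snd ℝ ℝ E3)).hasFDerivAt

lemma hasFDerivAt_inv_time {q : Spt} (hq : q.1 ≠ 0) :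
    HasFDerivAt (fun q : Spt => q.1⁻¹) (-(q.1 ^ 2)⁻¹ • ContinuousLinearMap.fst ℝ ℝ E3) q :=
  (hasDerivAt_inv hq).comp_hasFDerivAt q hasFDerivAt_fst

lemma lieBracket_boostField_shdField (b c : Fin 3) {q : Spt} (hq : q.1 ≠ 0) :
    lieBracket ℝ (boostField b) (shdField c) q = -(q.2 c / q.1) • shdField b q := by
  have hV : HasFDerivAt (𝕜 := ℝ) (boostField b) _ q :=
    (hasFDerivAt_coord b q).prodMk (hasFDerivAt_fst.smul_const (EuclideanSpace.single b (1 : ℝ)))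
  have hW := ((hasFDerivAt_coord c q).fun_mul (hasFDerivAt_inv_time hq)).prodMk
    (hasFDerivAt_const (EuclideanSpace.single c (1 : ℝ)) q)
  have hWc : shdField c = fun q : Spt => (q.2 c * q.1⁻¹, EuclideanSpace.single c (1 : ℝ)) := by
    funext q
    simp [shdField, div_eq_mul_inv]
  rw [lieBracket, hV.fderiv, hWc, hW.fderiv]
  ext i
  · simp only [boostField, shdField, ContinuousLinearMap.prod_apply, add_apply, smul_apply,
      ContinuousLinearMap.coe_fst', ContinuousLinearMap.comp_apply, ContinuousLinearMap.coe_snd',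
      ContinuousLinearMap.smulRight_apply, zero_apply, PiLp.proj_apply, PiLp.single_apply,
      PiLp.smul_apply, Prod.mk_sub_mk, Prod.smul_mk, smul_eq_mul]
    rcases eq_or_ne b c with rfl | hbc
    · simp only [↓reduceIte]
      field_simp
      ring
    · simp only [if_neg hbc, if_neg hbc.symm]
      field_simp
      ring
  · simp [boostField, shdField, div_eq_mul_inv]

lemma differentiableAt_boostField (a : Fin 3) (q : Spt) :
    DifferentiableAt ℝ (boostField a) q := by
  unfold boostField
  fun_prop

lemma differentiableAt_shdField (a : Fin 3) {q : Spt} (hq : q.1 ≠ 0) :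
    DifferentiableAt ℝ (shdField a) q := by
  unfold shdField
  fun_prop (disch := exact hq)

lemma lb_shd_sub_shd_lb {u : Spt → ℝ} {p : Spt} (hu : ContDiffAt ℝ 2 u p) (hp : p.1 ≠ 0)
    (b c : Fin 3) : lb b (shd c u) p - shd c (lb b u) p = -(p.2 c / p.1) * shd b u p := by
  have h := fderiv_apply_lieBracket hu (by simp) (differentiableAt_shdField c hp)
    (differentiableAt_boostField b p)
  rw [lieBracket_boostField_shdField b c hp, map_smul, smul_eq_mul] at h
  simp only [lb_eq_fderiv_boostField, shd_eq_fderiv_shdField]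
  exact h.symm

lemma ContDiffOn.lb {u : Spt → ℝ} (hu : ContDiffOn ℝ ∞ u lightCone) (a : Fin 3) :
    ContDiffOn ℝ ∞ (lb a u) lightCone := by
  rw [lb_eq_fderiv_boostField]
  exact hu.fderiv_apply_of_isOpen (by unfold boostField; fun_prop) isOpen_lightCone

lemma ContDiffOn.shd {u : Spt → ℝ} (hu : ContDiffOn ℝ ∞ u lightCone) (a : Fin 3) :
    ContDiffOn ℝ ∞ (shd a u) lightCone := by
  rw [shd_eq_fderiv_shdField]
  refine hu.fderiv_apply_of_isOpen ?_ isOpen_lightCone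
  unfold shdField
  fun_prop (disch := exact fun q hq => (pos_of_mem_lightCone hq).ne')

lemma ContDiffOn.lbW {u : Spt → ℝ} (hu : ContDiffOn ℝ ∞ u lightCone) (J : List (Fin 3)) :
    ContDiffOn ℝ ∞ (lbW J u) lightCone := by
  induction J with
  | nil => exact hu
  | cons b J ih => exact ih.lb b

lemma lb_congr_of_eqOn {f g : Spt → ℝ} (hfg : EqOn f g lightCone) {p : Spt}
    (hp : p ∈ lightCone) (b : Fin 3) : lb b f p = lb b g p := by
  simp only [lb_eq_fderiv_boostField, fderiv_eq_of_eqOn_lightCone hfg hp]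

lemma lb_sub {f g : Spt → ℝ} {p : Spt} (hf : DifferentiableAt ℝ f p)
    (hg : DifferentiableAt ℝ g p) (b : Fin 3) :
    lb b (fun q => f q - g q) p = lb b f p - lb b g p := by
  simp [lb_eq_fderiv_boostField, fderiv_fun_sub hf hg]

lemma lb_mul {f g : Spt → ℝ} {p : Spt} (hf : DifferentiableAt ℝ f p)
    (hg : DifferentiableAt ℝ g p) (b : Fin 3) :
    lb b (fun q => f q * g q) p = lb b f p * g p + f p * lb b g p := by
  simp only [lb_eq_fderiv_boostField, fderiv_fun_mul hf hg, add_apply, smul_apply, smul_eq_mul]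
  ring

lemma lb_list_sum {ι : Type*} (L : List ι) {F : ι → Spt → ℝ} {p : Spt}
    (hF : ∀ i ∈ L, DifferentiableAt ℝ (F i) p) (b : Fin 3) :
    lb b (fun q => (L.map (F · q)).sum) p = (L.map fun i => lb b (F i) p).sum := by
  simp only [← Fin.sum_univ_fun_getElem, lb_eq_fderiv_boostField]
  rw [fderiv_fun_sum fun i _ => hF _ (List.getElem_mem _)]
  simp

inductive HomogeneousOnCone : ℤ → (Spt → ℝ) → Prop
  | const (c : ℝ) : HomogeneousOnCone 0 fun _ => c
  | time : HomogeneousOnCone 1 Prod.fst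
  | coord (a : Fin 3) : HomogeneousOnCone 1 fun q => q.2 a
  | inv_time : HomogeneousOnCone (-1) fun q => q.1⁻¹
  | add {d : ℤ} {f g : Spt → ℝ} :
      HomogeneousOnCone d f → HomogeneousOnCone d g → HomogeneousOnCone d (f + g)
  | mul {d e : ℤ} {f g : Spt → ℝ} :
      HomogeneousOnCone d f → HomogeneousOnCone e g → HomogeneousOnCone (d + e) (f * g)
  | congr {d : ℤ} {f g : Spt → ℝ} :
      HomogeneousOnCone d f → EqOn f g lightCone → HomogeneousOnCone d g

namespace HomogeneousOnCone

variable {d e : ℤ} {f g : Spt → ℝ}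

lemma of_degree_eq (hf : HomogeneousOnCone d f) (h : d = e) : HomogeneousOnCone e f :=
  h ▸ hf

lemma congr_of_eq (hf : HomogeneousOnCone d f) (h : ∀ q, f q = g q) : HomogeneousOnCone d g :=
  hf.congr fun q _ => h q

lemma zpow_time (d : ℤ) : HomogeneousOnCone d fun q => q.1 ^ d := by
  induction d using Int.induction_on with
  | zero => exact (const 1).congr_of_eq fun q => (zpow_zero q.1).symm
  | succ n ih =>
    exact (ih.mul time).congr fun q hq => (zpow_add_one₀ (pos_of_mem_lightCone hq).ne' n).symm
  | pred n ih =>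
    exact (ih.mul inv_time).congr fun q hq => by simp [zpow_sub_one₀ (pos_of_mem_lightCone hq).ne']

lemma zero (d : ℤ) : HomogeneousOnCone d 0 :=
  (((const 0).mul (zpow_time d)).congr_of_eq fun _ => zero_mul _).of_degree_eq (zero_add d)

lemma neg (hf : HomogeneousOnCone d f) : HomogeneousOnCone d fun q => -f q :=
  (((const (-1)).mul hf).congr_of_eq fun q => neg_one_mul (f q)).of_degree_eq (zero_add d)

lemma coord_div_time (a : Fin 3) : HomogeneousOnCone 0 fun q => q.2 a / q.1 :=
  (((coord a).mul inv_time).congr_of_eq fun q => (div_eq_mul_inv _ _).symm).of_degree_eq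
    (by norm_num)

lemma list_sum {ι : Type*} (L : List ι) {F : ι → Spt → ℝ}
    (hF : ∀ i ∈ L, HomogeneousOnCone d (F i)) :
    HomogeneousOnCone d fun q => (L.map (F · q)).sum := by
  induction L with
  | nil => exact (zero d).congr_of_eq fun q => by simp
  | cons i L ih =>
    exact ((hF i (by simp)).add (ih fun j hj => hF j (by simp [hj]))).congr_of_eq fun q => by simp

lemma contDiffOn (hf : HomogeneousOnCone d f) : ContDiffOn ℝ ∞ f lightCone := by
  induction hf with
  | const c => exact contDiffOn_const
  | time => exact contDiffOn_fst
  | coord a =>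
    exact ((EuclideanSpace.proj a).comp (ContinuousLinearMap.snd ℝ ℝ E3)).contDiff.contDiffOn
  | inv_time => exact contDiffOn_fst.inv fun q hq => (pos_of_mem_lightCone hq).ne'
  | add _ _ ihf ihg => exact ihf.add ihg
  | mul _ _ ihf ihg => exact ihf.mul ihg
  | congr _ hfg ih => exact ih.congr fun q hq => (hfg hq).symm

lemma differentiableAt (hf : HomogeneousOnCone d f) {q : Spt} (hq : q ∈ lightCone) :
    DifferentiableAt ℝ f q :=
  hf.contDiffOn.differentiableAt_of_mem_lightCone hq

lemma abs_le (hf : HomogeneousOnCone d f) :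
    ∃ C, ∀ p ∈ lightCone, |f p| ≤ C * p.1 ^ (d : ℝ) := by
  induction hf with
  | const c => exact ⟨|c|, fun p _ => by simp⟩
  | time => exact ⟨1, fun p hp => by simp [abs_of_pos (pos_of_mem_lightCone hp)]⟩
  | coord a => exact ⟨1, fun p hp => by simpa using abs_coord_le_of_mem_lightCone hp a⟩
  | inv_time =>
    exact ⟨1, fun p hp => by simp [Real.rpow_neg_one, abs_of_pos (pos_of_mem_lightCone hp)]⟩
  | @add _ f₁ g₁ _ _ ihf ihg =>
    obtain ⟨C₁, h₁⟩ := ihf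
    obtain ⟨C₂, h₂⟩ := ihg
    exact ⟨C₁ + C₂, fun p hp => (abs_add_le (f₁ p) (g₁ p)).trans
      (by rw [add_mul]; exact add_le_add (h₁ p hp) (h₂ p hp))⟩
  | @mul d₁ d₂ f₁ g₁ _ _ ihf ihg =>
    obtain ⟨C₁, h₁⟩ := ihf
    obtain ⟨C₂, h₂⟩ := ihg
    refine ⟨C₁ * C₂, fun p hp => ?_⟩
    calc |(f₁ * g₁) p| = |f₁ p| * |g₁ p| := abs_mul _ _
    _ ≤ (C₁ * p.1 ^ (d₁ : ℝ)) * (C₂ * p.1 ^ (d₂ : ℝ)) :=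
      mul_le_mul (h₁ p hp) (h₂ p hp) (abs_nonneg _) ((abs_nonneg _).trans (h₁ p hp))
    _ = C₁ * C₂ * p.1 ^ ((d₁ + d₂ : ℤ) : ℝ) := by
      push_cast
      rw [Real.rpow_add (pos_of_mem_lightCone hp)]
      ring
  | congr _ hfg ih =>
    obtain ⟨C, hC⟩ := ih
    exact ⟨C, fun p hp => hfg hp ▸ hC p hp⟩

lemma fderiv_apply (hf : HomogeneousOnCone d f) (v : Spt) :
    HomogeneousOnCone (d - 1) fun q => fderiv ℝ f q v := by
  induction hf with
  | const c => exact (zero _).congr_of_eq fun q => by simp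
  | time => exact (const v.1).congr_of_eq fun q => by rw [fderiv_fst]; rfl
  | coord a =>
    exact (const (v.2 a)).congr_of_eq fun q => by rw [(hasFDerivAt_coord a q).fderiv]; rfl
  | inv_time =>
    refine (((const (-v.1)).mul (inv_time.mul inv_time)).of_degree_eq (by norm_num)).congr
      fun q hq => ?_
    rw [(hasFDerivAt_inv_time (pos_of_mem_lightCone hq).ne').fderiv]
    simp only [Pi.mul_apply, smul_apply, ContinuousLinearMap.coe_fst', smul_eq_mul]
    ring
  | add hf hg ihf ihg =>
    refine (ihf.add ihg).congr fun q hq => ?_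
    simp [fderiv_add (hf.differentiableAt hq) (hg.differentiableAt hq)]
  | mul hf hg ihf ihg =>
    refine (((hf.mul ihg).of_degree_eq (by ring)).add
      ((ihf.mul hg).of_degree_eq (by ring))).congr fun q hq => ?_
    simp only [Pi.add_apply, Pi.mul_apply, fderiv_mul (hf.differentiableAt hq)
      (hg.differentiableAt hq), add_apply, smul_apply, smul_eq_mul]
    ring
  | congr _ hfg ih =>
    exact ih.congr fun q hq => by simp only [fderiv_eq_of_eqOn_lightCone hfg hq]

lemma lb (hf : HomogeneousOnCone d f) (b : Fin 3) : HomogeneousOnCone d (lb b f) :=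
  ((((coord b).mul (hf.fderiv_apply _)).of_degree_eq (by ring)).add
    ((time.mul (hf.fderiv_apply _)).of_degree_eq (by ring))).congr_of_eq fun _ => rfl

lemma lbW (hf : HomogeneousOnCone d f) (J : List (Fin 3)) : HomogeneousOnCone d (lbW J f) := by
  induction J with
  | nil => exact hf
  | cons b J ih => exact ih.lb b

lemma pd (hf : HomogeneousOnCone d f) (α : Fin 4) : HomogeneousOnCone (d - 1) (pd α f) := by
  fin_cases α <;> exact hf.fderiv_apply _

lemma pdW (hf : HomogeneousOnCone d f) (I : List (Fin 4)) :
    HomogeneousOnCone (d - I.length) (pdW I f) := by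
  induction I with
  | nil => exact hf.of_degree_eq (by simp)
  | cons α I ih => exact (ih.pd α).of_degree_eq (by simp; ring)

end HomogeneousOnCone

structure BoostTerm where
  coeff : Spt → ℝ
  dir : Fin 3
  word : List (Fin 3)

namespace BoostTerm

def eval (e : BoostTerm) (u : Spt → ℝ) (p : Spt) : ℝ :=
  e.coeff p * shd e.dir (lbW e.word u) p

def boost (b : Fin 3) (e : BoostTerm) : List BoostTerm :=
  [⟨lb b e.coeff, e.dir, e.word⟩, ⟨e.coeff, e.dir, b :: e.word⟩,
    ⟨fun q => -(q.2 e.dir / q.1) * e.coeff q, b, e.word⟩]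

lemma lb_eval {e : BoostTerm} {u : Spt → ℝ} {p : Spt} (he : DifferentiableAt ℝ e.coeff p)
    (hu : ContDiffOn ℝ ∞ u lightCone) (hp : p ∈ lightCone) (b : Fin 3) :
    lb b (e.eval u) p = ((e.boost b).map (·.eval u p)).sum := by
  have hw := hu.lbW e.word
  have hcomm := lb_shd_sub_shd_lb ((hw.contDiffAt (isOpen_lightCone.mem_nhds hp)).of_le
    (by norm_cast)) (pos_of_mem_lightCone hp).ne' b e.dir
  change lb b (fun q => e.coeff q * shd e.dir (lbW e.word u) q) p = _
  rw [lb_mul he ((hw.shd _).differentiableAt_of_mem_lightCone hp), ← sub_add_cancel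
    (lb b (shd e.dir (lbW e.word u)) p) (shd e.dir (lb b (lbW e.word u)) p), hcomm]
  simp only [boost, eval, List.map_cons, List.map_nil, List.sum_cons, List.sum_nil, lbW]
  ring

end BoostTerm

def commutatorTerms (c : Fin 3) : List (Fin 3) → List BoostTerm
  | [] => []
  | b :: I =>
    (commutatorTerms c I).flatMap (BoostTerm.boost b) ++ [⟨fun q => -(q.2 c / q.1), b, I⟩]

lemma homogeneous_coeff_and_length_lt_of_mem_commutatorTerms {c : Fin 3} {I : List (Fin 3)}
    {e : BoostTerm} (he : e ∈ commutatorTerms c I) :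
    HomogeneousOnCone 0 e.coeff ∧ e.word.length < I.length := by
  induction I generalizing e with
  | nil => simp [commutatorTerms] at he
  | cons b I ih =>
    simp only [commutatorTerms, BoostTerm.boost, List.mem_append, List.mem_flatMap,
      List.mem_cons, List.not_mem_nil, or_false] at he
    rcases he with ⟨e', he', rfl | rfl | rfl⟩ | rfl
    · exact ⟨(ih he').1.lb b, Nat.lt_succ_of_lt (ih he').2⟩
    · exact ⟨(ih he').1, Nat.succ_lt_succ (ih he').2⟩
    · exact ⟨((HomogeneousOnCone.coord_div_time _).neg.mul (ih he').1).of_degree_eq rfl,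
        Nat.lt_succ_of_lt (ih he').2⟩
    · exact ⟨(HomogeneousOnCone.coord_div_time c).neg, Nat.lt_succ_self _⟩

lemma lbW_shd_sub_shd_lbW {u : Spt → ℝ} (hu : ContDiffOn ℝ ∞ u lightCone) (c : Fin 3)
    (I : List (Fin 3)) {p : Spt} (hp : p ∈ lightCone) :
    lbW I (shd c u) p - shd c (lbW I u) p = ((commutatorTerms c I).map (·.eval u p)).sum := by
  induction I generalizing p with
  | nil => simp [lbW, commutatorTerms]
  | cons b I ih =>
    have hcoeff {e : BoostTerm} (he : e ∈ commutatorTerms c I) : DifferentiableAt ℝ e.coeff p :=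
      (homogeneous_coeff_and_length_lt_of_mem_commutatorTerms he).1.differentiableAt hp
    have hdiff {w : Spt → ℝ} (hw : ContDiffOn ℝ ∞ w lightCone) : DifferentiableAt ℝ w p :=
      hw.differentiableAt_of_mem_lightCone hp
    calc lbW (b :: I) (shd c u) p - shd c (lbW (b :: I) u) p
        = lb b (fun q => lbW I (shd c u) q - shd c (lbW I u) q) p
            + (lb b (shd c (lbW I u)) p - shd c (lb b (lbW I u)) p) := by
          rw [lb_sub (hdiff ((hu.shd c).lbW I)) (hdiff ((hu.lbW I).shd c))]
          simp only [lbW]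
          ring
      _ = ((commutatorTerms c I).map fun e => lb b (e.eval u) p).sum
            + -(p.2 c / p.1) * shd b (lbW I u) p := by
          rw [lb_congr_of_eqOn (fun q hq => ih hq) hp,
            lb_list_sum (F := fun e => e.eval u) _ fun e he =>
              (hcoeff he).mul (hdiff ((hu.lbW _).shd _)),
            lb_shd_sub_shd_lb (((hu.lbW I).contDiffAt (isOpen_lightCone.mem_nhds hp)).of_le
              (by norm_cast)) (pos_of_mem_lightCone hp).ne']
      _ = ((commutatorTerms c (b :: I)).map (·.eval u p)).sum := by
          rw [List.map_congr_left fun e he => BoostTerm.lb_eval (hcoeff he) hu hp b]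
          simp [commutatorTerms, List.flatMap, List.sum_flatten, Function.comp_def,
            BoostTerm.eval]

lemma mem_wordsLe_of_length_le {k : Type} [DecidableEq k] [Fintype k] {n : ℕ} {l : List k}
    (hl : l.length ≤ n) : l ∈ wordsLe k n := by
  induction n generalizing l with
  | zero => simp_all [wordsLe]
  | succ n ih =>
    cases l with
    | nil => exact Finset.mem_union_left _ (ih (by simp))
    | cons a l =>
      exact Finset.mem_union_right _
        (Finset.mem_image.mpr ⟨(a, l), by simpa using ih (by simpa using hl), rfl⟩)

lemma List.sum_fiberwise_of_maps_to {α β M : Type*} [DecidableEq β] [AddCommMonoid M]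
    {L : List α} {T : Finset β} {g : α → β} (hT : ∀ x ∈ L, g x ∈ T) (f : α → M) :
    ∑ t ∈ T, ((L.filter (g · = t)).map f).sum = (L.map f).sum := by
  induction L with
  | nil => simp
  | cons x L ih =>
    have hsplit (t : β) : (((x :: L).filter (g · = t)).map f).sum
        = (if g x = t then f x else 0) + ((L.filter (g · = t)).map f).sum := by
      by_cases h : g x = t <;> simp [h]
    rw [Finset.sum_congr rfl fun t _ => hsplit t, Finset.sum_add_distrib, Finset.sum_ite_eq,
      if_pos (hT x (by simp)), ih fun y hy => hT y (by simp [hy]), List.map_cons, List.sum_cons]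

/-- Commutator of iterated Lorentz boosts with a semi-hyperboloidal derivative inside the
future light cone: `[L^I, ∂̄_c] u = Σ_{a, |J| < |I|} σ^a_J ∂̄_a L^J u`, where the smooth
coefficients `σ^a_J` satisfy `|∂^{I₁} L^{J₁} σ^a_J| ≤ C t^{−|I₁|}` in `K`. -/
theorem commutator_boostW_shd (I : List (Fin 3)) (c : Fin 3) :
    ∃ σf : Fin 3 → List (Fin 3) → Spt → ℝ,
      (∀ (a : Fin 3) (J : List (Fin 3)),
        ContDiffOn ℝ (⊤ : ℕ∞) (σf a J) lightCone) ∧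
      (∀ u : Spt → ℝ, ContDiffOn ℝ (⊤ : ℕ∞) u lightCone →
        ∀ p ∈ lightCone,
          lbW I (shd c u) p - shd c (lbW I u) p =
            ∑ a : Fin 3,
              ∑ J ∈ (wordsLe (Fin 3) I.length).filter fun l => l.length < I.length,
                σf a J p * shd a (lbW J u) p) ∧
      (∀ (a : Fin 3) (J : List (Fin 3)) (I₁ : List (Fin 4)) (J₁ : List (Fin 3)),
        ∃ C : ℝ, ∀ p ∈ lightCone,
          |pdW I₁ (lbW J₁ (σf a J)) p| ≤ C * p.1 ^ (-(I₁.length : ℝ))) := by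
  let σ : Fin 3 → List (Fin 3) → Spt → ℝ := fun a J q =>
    (((commutatorTerms c I).filter fun e => (e.dir, e.word) = (a, J)).map (·.coeff q)).sum
  have hσ (a : Fin 3) (J : List (Fin 3)) : HomogeneousOnCone 0 (σ a J) :=
    HomogeneousOnCone.list_sum _ fun e he =>
      (homogeneous_coeff_and_length_lt_of_mem_commutatorTerms (List.mem_of_mem_filter he)).1
  refine ⟨σ, fun a J => (hσ a J).contDiffOn, fun u hu p hp => ?_, fun a J I₁ J₁ => ?_⟩
  · rw [lbW_shd_sub_shd_lbW hu c I hp, ← List.sum_fiberwise_of_maps_to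
      (T := Finset.univ ×ˢ _) (g := fun e => (e.dir, e.word)) fun e he => ?_, Finset.sum_product]
    · refine Finset.sum_congr rfl fun a _ => Finset.sum_congr rfl fun J _ => ?_
      rw [← List.sum_map_mul_right]
      refine congrArg List.sum (List.map_congr_left fun e he => ?_)
      obtain ⟨rfl, rfl⟩ : e.dir = a ∧ e.word = J := by simpa using (List.mem_filter.mp he).2
      rfl
    · have hlen := (homogeneous_coeff_and_length_lt_of_mem_commutatorTerms he).2
      simpa using ⟨mem_wordsLe_of_length_le hlen.le, hlen⟩
  · obtain ⟨C, hC⟩ := (((hσ a J).lbW J₁).pdW I₁).abs_le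
    exact ⟨C, fun p hp => by simpa using hC p hp⟩
end
end

section
/- There exists a constant C > 0 such that for all t ≥ 2 and all x ∈ ℝ³ with |x| ≤ t − 1, ∫₂^t (t − τ)^{−1} ( ∫_{S(0, t−τ)} 1_{{|x − y| ≥ τ − 1}} |x − y|^{−4} dσ(y) ) dτ ≤ C t^{−1}, where S(0,R) = {y ∈ ℝ³ : |y| = R} and σ is the rotation-invariant surface measure on S(0,R) with total mass 4πR², and 1_{{|x−y| ≥ τ−1}} denotes the indicator of the set {y : |x − y| ≥ τ − 1}. -/
noncomputable section
open MeasureTheory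

/-- Surface integral `∫_{S(x,R)} g dσ` over the sphere of center `x` and radius `R`,
with respect to the rotation-invariant surface measure of total mass `4πR²`:
`∫_{S(x,R)} g dσ = R² ∫_{S(0,1)} g(x + Rω) dσ₁(ω)`, where `σ₁` is the canonical
surface measure on the unit sphere (of total mass `4π`). -/
def sphereIntegral (x : E3) (R : ℝ) (g : E3 → ℝ) : ℝ :=
  R ^ 2 * ∫ ω : Metric.sphere (0 : E3) 1, g (x + R • (ω : E3))
    ∂((volume : Measure E3).toSphere)

/-!
Substituting `r = t - τ` and reading `r² dr dσ₁(ω)` as polar coordinates `y = r ω` turns the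
double integral into `∫_{‖y‖ < t - 2} ‖y‖⁻¹ 1_{‖x - y‖ ≥ t - ‖y‖ - 1} ‖x - y‖⁻⁴ dy`.
On its support `‖x - y‖ > 1`; where moreover `‖x - y‖ < t / 4`, the point `y` is far from the
origin, `‖y‖ ≥ t / 2`, and elsewhere `‖x - y‖⁻⁴ ≤ (4 / t)⁴`. Hence the integrand is at most
`(2 / t) 1_{‖x - y‖ > 1} ‖x - y‖⁻⁴ + (4 / t)⁴ ‖y‖⁻¹`, whose integrals over the ball are
`O(t⁻¹)` and `O(t⁻⁴ t²)`.
-/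

open Set Metric
open scoped ENNReal

theorem lintegral_sphere_fun_norm_smul {E : Type*} [NormedAddCommGroup E] [NormedSpace ℝ E]
    [MeasurableSpace E] (ν : Measure (sphere (0 : E) 1)) (f : ℝ → ℝ≥0∞) {r : ℝ} (hr : 0 ≤ r) :
    ∫⁻ ω : sphere (0 : E) 1, f ‖r • (ω : E)‖ ∂ν = ν univ * f r := by
  simp [norm_smul, abs_of_nonneg hr, mul_comm]

section Polar

variable {E : Type*} [NormedAddCommGroup E] [NormedSpace ℝ E] [FiniteDimensional ℝ E]
  [Nontrivial E] [MeasurableSpace E] [BorelSpace E] (μ : Measure E) [μ.IsAddHaarMeasure]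

theorem lintegral_eq_lintegral_Ioi_mul_lintegral_sphere {f : E → ℝ≥0∞} (hf : Measurable f) :
    ∫⁻ y, f y ∂μ = ∫⁻ r in Ioi (0 : ℝ), ENNReal.ofReal (r ^ (Module.finrank ℝ E - 1)) *
      ∫⁻ ω : sphere (0 : E) 1, f (r • (ω : E)) ∂μ.toSphere := by
  have hmeas : Measurable fun p : sphere (0 : E) 1 × Ioi (0 : ℝ) ↦ f (p.2.1 • p.1.1) :=
    hf.comp (by fun_prop)
  calc ∫⁻ y, f y ∂μ = ∫⁻ y : ({0}ᶜ : Set E), f y ∂μ.comap (↑) := by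
        rw [lintegral_subtype_comap (measurableSet_singleton 0).compl, restrict_compl_singleton]
    _ = ∫⁻ p : sphere (0 : E) 1 × Ioi (0 : ℝ), f (p.2.1 • p.1.1)
          ∂μ.toSphere.prod (.volumeIoiPow (Module.finrank ℝ E - 1)) := by
        rw [← (μ.measurePreserving_homeomorphUnitSphereProd).lintegral_comp_emb
          (Homeomorph.measurableEmbedding _)]
        refine lintegral_congr fun y ↦ ?_
        simp [smul_inv_smul₀ (norm_ne_zero_iff.2 y.2)]
    _ = ∫⁻ r : Ioi (0 : ℝ), ∫⁻ ω : sphere (0 : E) 1, f (r.1 • ω.1) ∂μ.toSphere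
          ∂.volumeIoiPow (Module.finrank ℝ E - 1) :=
        lintegral_prod_symm _ hmeas.aemeasurable
    _ = _ := by
        rw [Measure.volumeIoiPow, lintegral_withDensity_eq_lintegral_mul _ (by fun_prop)
          hmeas.lintegral_prod_left', ← lintegral_subtype_comap measurableSet_Ioi]
        rfl

theorem setLIntegral_ball_eq_lintegral_Ioo_mul_lintegral_sphere {f : E → ℝ≥0∞}
    (hf : Measurable f) (R : ℝ) :
    ∫⁻ y in ball 0 R, f y ∂μ = ∫⁻ r in Ioo 0 R, ENNReal.ofReal (r ^ (Module.finrank ℝ E - 1)) *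
      ∫⁻ ω : sphere (0 : E) 1, f (r • (ω : E)) ∂μ.toSphere := by
  rw [← lintegral_indicator measurableSet_ball,
    lintegral_eq_lintegral_Ioi_mul_lintegral_sphere μ (hf.indicator measurableSet_ball),
    ← Iio_inter_Ioi, ← Measure.restrict_restrict measurableSet_Iio,
    ← lintegral_indicator measurableSet_Iio]
  refine setLIntegral_congr_fun measurableSet_Ioi fun r (hr : 0 < r) ↦ ?_
  have hnorm (ω : sphere (0 : E) 1) : ‖r • (ω : E)‖ = r := by simp [norm_smul, hr.le]
  by_cases hrR : r < R <;> simp [indicator, hnorm, hrR]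

theorem lintegral_fun_norm_addHaar {f : ℝ → ℝ≥0∞} (hf : Measurable f) :
    ∫⁻ y, f ‖y‖ ∂μ = μ.toSphere univ *
      ∫⁻ r in Ioi (0 : ℝ), ENNReal.ofReal (r ^ (Module.finrank ℝ E - 1)) * f r := by
  rw [lintegral_eq_lintegral_Ioi_mul_lintegral_sphere μ (f := fun y ↦ f ‖y‖)
      (hf.comp measurable_norm), ← lintegral_const_mul' _ _ (measure_ne_top _ _)]
  refine setLIntegral_congr_fun measurableSet_Ioi fun r (hr : 0 < r) ↦ ?_
  rw [lintegral_sphere_fun_norm_smul _ f hr.le, mul_left_comm]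

theorem setLIntegral_ball_fun_norm_addHaar {f : ℝ → ℝ≥0∞} (hf : Measurable f) (R : ℝ) :
    ∫⁻ y in ball 0 R, f ‖y‖ ∂μ = μ.toSphere univ *
      ∫⁻ r in Ioo 0 R, ENNReal.ofReal (r ^ (Module.finrank ℝ E - 1)) * f r := by
  rw [setLIntegral_ball_eq_lintegral_Ioo_mul_lintegral_sphere μ (f := fun y ↦ f ‖y‖)
      (hf.comp measurable_norm), ← lintegral_const_mul' _ _ (measure_ne_top _ _)]
  refine setLIntegral_congr_fun measurableSet_Ioo fun r hr ↦ ?_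
  rw [lintegral_sphere_fun_norm_smul _ f hr.1.le, mul_left_comm]

end Polar

theorem integral_le_of_lintegral_enorm_le {α : Type*} [MeasurableSpace α] {μ : Measure α}
    {f : α → ℝ} {C : ℝ} (hC : 0 ≤ C) (h : ∫⁻ a, ‖f a‖ₑ ∂μ ≤ ENNReal.ofReal C) :
    ∫ a, f a ∂μ ≤ C :=
  (le_abs_self _).trans <| by
    rw [← Real.norm_eq_abs, ← toReal_enorm]
    exact ENNReal.toReal_le_of_le_ofReal hC ((enorm_integral_le_lintegral_enorm f).trans h)

theorem setLIntegral_Ioc_comp_sub_left (f : ℝ → ℝ≥0∞) (a b : ℝ) :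
    ∫⁻ τ in Ioc a b, f (b - τ) = ∫⁻ r in Ico 0 (b - a), f r := by
  rw [(Measure.measurePreserving_sub_left volume b).setLIntegral_comp_emb
    (MeasurableEquiv.subLeft b).measurableEmbedding, image_const_sub_Ioc, sub_self]

def tailProfile : ℝ → ℝ≥0∞ :=
  (Ioi 1).indicator fun ρ ↦ ENNReal.ofReal (ρ ^ (-(4 : ℝ)))

theorem measurable_tailProfile : Measurable tailProfile :=
  Measurable.indicator (by fun_prop) measurableSet_Ioi

theorem lintegral_Ioi_sq_mul_tailProfile :
    ∫⁻ r in Ioi (0 : ℝ), ENNReal.ofReal (r ^ 2) * tailProfile r = 1 := by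
  calc _ = ∫⁻ r in Ioi (0 : ℝ), (Ioi 1).indicator (fun r ↦ ENNReal.ofReal (r ^ (-(2 : ℝ)))) r := by
        refine setLIntegral_congr_fun measurableSet_Ioi fun r (hr : 0 < r) ↦ ?_
        by_cases hr1 : r ∈ Ioi 1
        · rw [tailProfile, indicator_of_mem hr1, indicator_of_mem hr1,
            ← ENNReal.ofReal_mul (by positivity), ← Real.rpow_natCast, ← Real.rpow_add hr]
          norm_num
        · simp [tailProfile, hr1]
    _ = ∫⁻ r in Ioi (1 : ℝ), ENNReal.ofReal (r ^ (-(2 : ℝ))) := by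
        rw [lintegral_indicator measurableSet_Ioi, Measure.restrict_restrict measurableSet_Ioi,
          inter_eq_left.2 (Ioi_subset_Ioi zero_le_one)]
    _ = ENNReal.ofReal (∫ r in Ioi (1 : ℝ), r ^ (-(2 : ℝ))) := by
        refine (ofReal_integral_eq_lintegral_ofReal
          (integrableOn_Ioi_rpow_of_lt (by norm_num) one_pos) ?_).symm
        filter_upwards [ae_restrict_mem measurableSet_Ioi] with r hr
        exact Real.rpow_nonneg (zero_le_one.trans hr.out.le) _
    _ = 1 := by
        rw [integral_Ioi_rpow_of_lt (by norm_num) one_pos]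
        norm_num

theorem lintegral_Ioo_sq_mul_inv {s : ℝ} (hs : 0 ≤ s) :
    ∫⁻ r in Ioo (0 : ℝ) s, ENNReal.ofReal (r ^ 2) * ENNReal.ofReal r⁻¹ =
      ENNReal.ofReal (s ^ 2 / 2) := by
  calc _ = ∫⁻ r in Ioc (0 : ℝ) s, ENNReal.ofReal r := by
        rw [Measure.restrict_congr_set Ioo_ae_eq_Ioc]
        refine setLIntegral_congr_fun measurableSet_Ioc fun r hr ↦ ?_
        rw [← ENNReal.ofReal_mul (by positivity)]
        field_simp [hr.1.ne']
    _ = ENNReal.ofReal (s ^ 2 / 2) := by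
        rw [← ofReal_integral_eq_lintegral_ofReal intervalIntegral.intervalIntegrable_id.1,
          ← intervalIntegral.integral_of_le hs, integral_id]
        · norm_num
        · filter_upwards [ae_restrict_mem measurableSet_Ioc] with r hr
          exact hr.1.le

def exteriorSource (x : E3) (τ : ℝ) : E3 → ℝ :=
  {z | τ - 1 ≤ ‖x - z‖}.indicator fun z ↦ ‖x - z‖ ^ (-(4 : ℝ))

def duhamelDensity (t : ℝ) (x y : E3) : ℝ≥0∞ :=
  ‖‖y‖⁻¹ * exteriorSource x (t - ‖y‖) y‖ₑ

theorem measurable_duhamelDensity (t : ℝ) (x : E3) : Measurable (duhamelDensity t x) := by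
  have hset : MeasurableSet {y : E3 | t - ‖y‖ - 1 ≤ ‖x - y‖} :=
    measurableSet_le (by fun_prop) (by fun_prop)
  refine Measurable.enorm (measurable_norm.inv.mul ?_)
  simp only [exteriorSource, indicator, mem_ofPred_eq]
  exact Measurable.ite hset (by fun_prop) measurable_const

theorem enorm_sphereIntegral_le (x : E3) (R : ℝ) (g : E3 → ℝ) :
    ‖sphereIntegral x R g‖ₑ ≤ ENNReal.ofReal (R ^ 2) *
      ∫⁻ ω : sphere (0 : E3) 1, ‖g (x + R • (ω : E3))‖ₑ ∂(volume : Measure E3).toSphere := by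
  rw [sphereIntegral, enorm_mul, Real.enorm_of_nonneg (sq_nonneg R)]
  gcongr
  exact enorm_integral_le_lintegral_enorm _

theorem enorm_duhamelIntegrand_le {t τ : ℝ} (hτ : τ ≤ t) (x : E3) :
    ‖(t - τ)⁻¹ * sphereIntegral 0 (t - τ) (exteriorSource x τ)‖ₑ ≤
      ENNReal.ofReal ((t - τ) ^ 2) * ∫⁻ ω : sphere (0 : E3) 1,
        duhamelDensity t x ((t - τ) • (ω : E3)) ∂(volume : Measure E3).toSphere := by
  have hnorm (ω : sphere (0 : E3) 1) : ‖(t - τ) • (ω : E3)‖ = t - τ := by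
    simp [norm_smul, abs_of_nonneg (sub_nonneg.2 hτ)]
  calc _ ≤ ‖(t - τ)⁻¹‖ₑ * (ENNReal.ofReal ((t - τ) ^ 2) * ∫⁻ ω : sphere (0 : E3) 1,
        ‖exteriorSource x τ (0 + (t - τ) • (ω : E3))‖ₑ ∂(volume : Measure E3).toSphere) := by
        rw [enorm_mul]
        gcongr
        exact enorm_sphereIntegral_le _ _ _
    _ = _ := by
        rw [mul_left_comm, ← lintegral_const_mul' _ _ enorm_ne_top]
        simp only [duhamelDensity, hnorm, sub_sub_cancel, zero_add, enorm_mul]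

theorem inv_mul_rpow_neg_four_le {t r ρ : ℝ} (hr : 0 ≤ r) (hrt : r < t - 2)
    (hρ : t - r - 1 ≤ ρ) :
    r⁻¹ * ρ ^ (-(4 : ℝ)) ≤ 2 * t⁻¹ * ρ ^ (-(4 : ℝ)) + (4 * t⁻¹) ^ 4 * r⁻¹ := by
  have ht : 0 < t := by linarith
  have hρ₀ : 0 < ρ := by linarith
  rcases lt_or_ge ρ (t / 4) with hnear | hfar
  · -- here `t > 4`, so `r ≥ t - 1 - ρ > 3 t / 4 - 1 ≥ t / 2`
    have hr' : r⁻¹ ≤ 2 * t⁻¹ :=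
      calc r⁻¹ ≤ (t / 2)⁻¹ := inv_anti₀ (by positivity) (by linarith)
        _ = 2 * t⁻¹ := by rw [inv_div, div_eq_mul_inv]
    calc r⁻¹ * ρ ^ (-(4 : ℝ)) ≤ 2 * t⁻¹ * ρ ^ (-(4 : ℝ)) := by gcongr
      _ ≤ _ := le_add_of_nonneg_right (by positivity)
  · have hρ' : ρ ^ (-(4 : ℝ)) ≤ (4 * t⁻¹) ^ 4 := by
      rw [Real.rpow_neg hρ₀.le, Real.rpow_ofNat, show 4 * t⁻¹ = (t / 4)⁻¹ by
        rw [inv_div, div_eq_mul_inv], inv_pow]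
      gcongr
    calc r⁻¹ * ρ ^ (-(4 : ℝ)) ≤ (4 * t⁻¹) ^ 4 * r⁻¹ := by rw [mul_comm]; gcongr
      _ ≤ _ := le_add_of_nonneg_left (by positivity)

theorem duhamelDensity_le {t : ℝ} (x : E3) {y : E3} (hy : y ∈ ball 0 (t - 2)) :
    duhamelDensity t x y ≤ ENNReal.ofReal (2 * t⁻¹) * tailProfile ‖y - x‖ +
      ENNReal.ofReal ((4 * t⁻¹) ^ 4) * ENNReal.ofReal ‖y‖⁻¹ := by
  rw [mem_ball_zero_iff] at hy
  have ht : 0 < t := by linarith [norm_nonneg y]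
  by_cases hρ : t - ‖y‖ - 1 ≤ ‖x - y‖
  · have htail : tailProfile ‖y - x‖ = ENNReal.ofReal (‖x - y‖ ^ (-(4 : ℝ))) := by
      rw [tailProfile, norm_sub_rev, indicator_of_mem (by simp only [mem_Ioi]; linarith)]
    rw [duhamelDensity, exteriorSource, indicator_of_mem (by exact hρ), htail,
      Real.enorm_of_nonneg (by positivity), ← ENNReal.ofReal_mul (by positivity),
      ← ENNReal.ofReal_mul (by positivity), ← ENNReal.ofReal_add (by positivity) (by positivity)]
    exact ENNReal.ofReal_le_ofReal (inv_mul_rpow_neg_four_le (norm_nonneg y) hy hρ)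
  · rw [duhamelDensity, exteriorSource, indicator_of_notMem (show y ∉ _ from hρ), mul_zero,
      enorm_zero]
    exact zero_le

theorem lintegral_tailProfile_norm :
    ∫⁻ y : E3, tailProfile ‖y‖ = (volume : Measure E3).toSphere univ := by
  rw [lintegral_fun_norm_addHaar _ measurable_tailProfile, finrank_euclideanSpace_fin,
    lintegral_Ioi_sq_mul_tailProfile, mul_one]

theorem setLIntegral_ball_ofReal_inv_norm {s : ℝ} (hs : 0 ≤ s) :
    ∫⁻ y in ball (0 : E3) s, ENNReal.ofReal ‖y‖⁻¹ =
      (volume : Measure E3).toSphere univ * ENNReal.ofReal (s ^ 2 / 2) := by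
  rw [setLIntegral_ball_fun_norm_addHaar _ (f := fun r ↦ ENNReal.ofReal r⁻¹) (by fun_prop),
    finrank_euclideanSpace_fin, lintegral_Ioo_sq_mul_inv hs]

theorem setLIntegral_ball_duhamelDensity_le {t : ℝ} (ht : 2 ≤ t) (x : E3) :
    ∫⁻ y in ball 0 (t - 2), duhamelDensity t x y ≤
      ENNReal.ofReal (66 * t⁻¹) * (volume : Measure E3).toSphere univ := by
  set σ := (volume : Measure E3).toSphere univ
  have hbound : 2 * t⁻¹ + (4 * t⁻¹) ^ 4 * ((t - 2) ^ 2 / 2) ≤ 66 * t⁻¹ := by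
    have hu₀ : 0 ≤ t⁻¹ := by positivity
    have hu : t⁻¹ ≤ 1 / 2 := by rw [one_div]; exact inv_anti₀ (by norm_num) ht
    calc 2 * t⁻¹ + (4 * t⁻¹) ^ 4 * ((t - 2) ^ 2 / 2)
        = 2 * t⁻¹ + 128 * t⁻¹ ^ 4 * (t - 2) ^ 2 := by ring
      _ ≤ 2 * t⁻¹ + 128 * t⁻¹ ^ 4 * t ^ 2 := by gcongr; linarith
      _ = 2 * t⁻¹ + 128 * t⁻¹ ^ 2 := by field_simp
      _ ≤ 66 * t⁻¹ := by nlinarith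
  calc ∫⁻ y in ball 0 (t - 2), duhamelDensity t x y
      ≤ ∫⁻ y in ball 0 (t - 2), (ENNReal.ofReal (2 * t⁻¹) * tailProfile ‖y - x‖ +
          ENNReal.ofReal ((4 * t⁻¹) ^ 4) * ENNReal.ofReal ‖y‖⁻¹) :=
        setLIntegral_mono' measurableSet_ball fun y hy ↦ duhamelDensity_le x hy
    _ = ENNReal.ofReal (2 * t⁻¹) * (∫⁻ y in ball 0 (t - 2), tailProfile ‖y - x‖) +
          ENNReal.ofReal ((4 * t⁻¹) ^ 4) * ∫⁻ y in ball (0 : E3) (t - 2), ENNReal.ofReal ‖y‖⁻¹ := by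
        have hmeas : Measurable fun y : E3 ↦ ENNReal.ofReal (2 * t⁻¹) * tailProfile ‖y - x‖ :=
          (measurable_tailProfile.comp (by fun_prop)).const_mul _
        rw [lintegral_add_left hmeas, lintegral_const_mul' _ _ ENNReal.ofReal_ne_top,
          lintegral_const_mul' _ _ ENNReal.ofReal_ne_top]
    _ ≤ ENNReal.ofReal (2 * t⁻¹) * (∫⁻ y, tailProfile ‖y - x‖) +
          ENNReal.ofReal ((4 * t⁻¹) ^ 4) * ∫⁻ y in ball (0 : E3) (t - 2), ENNReal.ofReal ‖y‖⁻¹ := by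
        gcongr
        exact Measure.restrict_le_self
    _ = (ENNReal.ofReal (2 * t⁻¹) + ENNReal.ofReal ((4 * t⁻¹) ^ 4) *
          ENNReal.ofReal ((t - 2) ^ 2 / 2)) * σ := by
        rw [lintegral_sub_right_eq_self (fun y ↦ tailProfile ‖y‖) x, lintegral_tailProfile_norm,
          setLIntegral_ball_ofReal_inv_norm (by linarith)]
        ring
    _ ≤ ENNReal.ofReal (66 * t⁻¹) * σ := by
        rw [← ENNReal.ofReal_mul (by positivity), ← ENNReal.ofReal_add (by positivity)
          (by positivity)]
        gcongr

/-- Duhamel-type estimate: for `t ≥ 2` and `|x| ≤ t − 1`,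
`∫₂^t (t−τ)⁻¹ ∫_{S(0,t−τ)} 1_{{|x−y| ≥ τ−1}} |x−y|⁻⁴ dσ(y) dτ ≤ C t⁻¹`. -/
theorem exterior_source_duhamel_estimate :
    ∃ C > (0 : ℝ), ∀ t : ℝ, 2 ≤ t → ∀ x : E3, ‖x‖ ≤ t - 1 →
      (∫ τ in (2 : ℝ)..t,
        (t - τ)⁻¹ *
          sphereIntegral 0 (t - τ)
            (fun y => Set.indicator {z : E3 | τ - 1 ≤ ‖x - z‖}
              (fun z => ‖x - z‖ ^ (-(4 : ℝ))) y)) ≤ C * t⁻¹ := by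
  set σ := (volume : Measure E3).toSphere
  have hσ : 0 < σ.real univ :=
    ENNReal.toReal_pos (Measure.measure_univ_ne_zero.2 (Measure.toSphere_ne_zero _))
      (measure_ne_top _ _)
  refine ⟨66 * σ.real univ, by positivity, fun t ht x _ ↦ ?_⟩
  rw [intervalIntegral.integral_of_le ht]
  refine integral_le_of_lintegral_enorm_le (by positivity) ?_
  calc ∫⁻ τ in Ioc 2 t, ‖(t - τ)⁻¹ * sphereIntegral 0 (t - τ) (exteriorSource x τ)‖ₑ
      ≤ ∫⁻ τ in Ioc 2 t, ENNReal.ofReal ((t - τ) ^ 2) *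
          ∫⁻ ω : sphere (0 : E3) 1, duhamelDensity t x ((t - τ) • (ω : E3)) ∂σ :=
        setLIntegral_mono' measurableSet_Ioc fun τ hτ ↦ enorm_duhamelIntegrand_le hτ.2 x
    _ = ∫⁻ r in Ioo 0 (t - 2), ENNReal.ofReal (r ^ 2) *
          ∫⁻ ω : sphere (0 : E3) 1, duhamelDensity t x (r • (ω : E3)) ∂σ := by
        rw [setLIntegral_Ioc_comp_sub_left (fun r ↦ ENNReal.ofReal (r ^ 2) *
          ∫⁻ ω : sphere (0 : E3) 1, duhamelDensity t x (r • (ω : E3)) ∂σ),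
          Measure.restrict_congr_set Ioo_ae_eq_Ico]
    _ = ∫⁻ y in ball 0 (t - 2), duhamelDensity t x y := by
        rw [setLIntegral_ball_eq_lintegral_Ioo_mul_lintegral_sphere _
          (measurable_duhamelDensity t x), finrank_euclideanSpace_fin]
    _ ≤ ENNReal.ofReal (66 * t⁻¹) * σ univ := setLIntegral_ball_duhamelDensity_le ht x
    _ = ENNReal.ofReal (66 * σ.real univ * t⁻¹) := by
        rw [mul_right_comm, ENNReal.ofReal_mul (by positivity : (0 : ℝ) ≤ 66 * t⁻¹),
          measureReal_def, ENNReal.ofReal_toReal (measure_ne_top _ _)]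
end
end
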